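/- For standard Brownian motion B with B_0 = 0 and f_t the N(0,t) density, for any x ∈ ℝ and T > 0: E[(B_T − x)^+] = (−x)^+ + (1/2) ∫₀^T f_t(x) dt. -/

import Mathlib

open Real MeasureTheory ProbabilityTheory

/-- The centered Gaussian density with variance `t`. -/
noncomputable def gaussDensity (t y : ℝ) : ℝ :=
  Real.exp (-(y ^ 2) / (2 * t)) / Real.sqrt (2 * Real.pi * t)

/-!
Write `B_T = √T Z` with `Z` standard normal, so that `E[(B_T − x)⁺] = C(√T)` for
`C(s) = E[(sZ − x)⁺]`. For `s > 0` the integral is explicit,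
`C(s) = s φ(x/s) − x Ψ(x/s)` with `φ` the standard normal density and `Ψ` its upper tail,
and its derivative collapses to `φ(x/s)`. Hence `d/dT C(√T) = φ(x/√T) / (2√T) = f_T(x) / 2`.
Since `s ↦ (sz − x)⁺` is `|z|`-Lipschitz, `C` is continuous, with `C(0) = (−x)⁺`, and the
fundamental theorem of calculus on `[0, T]` gives the identity; the derivative being
nonnegative, it is integrable near `0`.
-/

open Filter Set Topology
open scoped NNReal

theorem hasDerivAt_integral_Ioi {f : ℝ → ℝ} (hf : Integrable f) {a : ℝ}
    (hfa : ContinuousAt f a) : HasDerivAt (fun b => ∫ z in Ioi b, f z) (-f a) a := by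
  have hshift : (fun b => ∫ z in Ioi b, f z) =
      fun b => (∫ z in Ioi 0, f z) - ∫ z in 0..b, f z := by
    ext b
    rw [← intervalIntegral.integral_Ioi_sub_Ioi' hf.integrableOn hf.integrableOn, sub_sub_cancel]
  rw [hshift]
  exact (intervalIntegral.integral_hasDerivAt_right hf.intervalIntegrable
    hf.aestronglyMeasurable.stronglyMeasurableAtFilter hfa).const_sub _

theorem continuous_integral_max_mul_sub {ν : Measure ℝ} [IsFiniteMeasure ν]
    (hν : Integrable id ν) (x : ℝ) : Continuous fun s => ∫ z, max (s * z - x) 0 ∂ν := by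
  have hint : ∀ s, Integrable (fun z => max (s * z - x) 0) ν := fun s =>
    ((hν.const_mul s).sub (integrable_const x)).pos_part
  refine (LipschitzWith.of_dist_le_mul fun s s' => ?_).continuous (K := (∫ z, |z| ∂ν).toNNReal)
  rw [Real.dist_eq, Real.dist_eq, Real.coe_toNNReal _ (integral_nonneg fun _ => abs_nonneg _),
    ← integral_sub (hint s) (hint s'), ← integral_mul_const]
  refine (abs_integral_le_integral_abs).trans (integral_mono (hint s |>.sub (hint s')).abs
    (hν.abs.mul_const _) fun z => ?_)
  calc |max (s * z - x) 0 - max (s' * z - x) 0| ≤ |s * z - x - (s' * z - x)| :=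
        abs_max_sub_max_le_abs _ _ _
    _ = |z| * |s - s'| := by rw [← abs_mul]; ring_nf

namespace ProbabilityTheory

variable (μ : ℝ) (v : ℝ≥0)

theorem hasDerivAt_gaussianPDFReal (x : ℝ) :
    HasDerivAt (gaussianPDFReal μ v) (-(x - μ) / v * gaussianPDFReal μ v x) x := by
  have h := ((((hasDerivAt_id x).sub_const μ).pow 2).neg.div_const (2 * (v : ℝ))).exp.const_mul
    (√(2 * π * v))⁻¹
  refine h.congr_deriv ?_
  simp only [gaussianPDFReal, Pi.neg_apply, Pi.pow_apply, id]
  ring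

theorem tendsto_gaussianPDFReal_atTop : Tendsto (gaussianPDFReal μ v) atTop (𝓝 0) := by
  rcases eq_or_ne v 0 with rfl | hv
  · exact (gaussianPDFReal_zero_var μ).symm ▸ tendsto_const_nhds
  have h : Tendsto (fun x => -(x - μ) ^ 2 / (2 * v)) atTop atBot :=
    (tendsto_neg_atTop_atBot.comp ((tendsto_pow_atTop two_ne_zero).comp
      (tendsto_atTop_add_const_right _ (-μ) tendsto_id))).atBot_div_const (by positivity)
  rw [gaussianPDFReal_def]
  simpa using (tendsto_exp_atBot.comp h).const_mul (√(2 * π * v))⁻¹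

theorem integrable_gaussianReal_iff {f : ℝ → ℝ} (hv : v ≠ 0) :
    Integrable f (gaussianReal μ v) ↔ Integrable (fun x => gaussianPDFReal μ v x * f x) := by
  rw [gaussianReal_of_var_ne_zero μ hv, integrable_withDensity_iff_integrable_smul'
    (measurable_gaussianPDF μ v) (ae_of_all _ fun _ => gaussianPDF_lt_top)]
  simp only [toReal_gaussianPDF, smul_eq_mul]

theorem integrable_sub_mul_gaussianPDFReal :
    Integrable (fun z => (z - μ) * gaussianPDFReal μ v z) := by
  rcases eq_or_ne v 0 with rfl | hv
  · simp
  simpa only [mul_comm] using (integrable_gaussianReal_iff μ v (f := fun z => z - μ) hv).1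
    (((memLp_id_gaussianReal 1).integrable le_rfl).sub (integrable_const μ))

theorem integral_Ioi_sub_mul_gaussianPDFReal (a : ℝ) :
    ∫ z in Ioi a, (z - μ) * gaussianPDFReal μ v z = v * gaussianPDFReal μ v a := by
  rcases eq_or_ne v 0 with rfl | hv
  · simp
  have hderiv : ∀ z ∈ Ici a,
      HasDerivAt (fun z => -v * gaussianPDFReal μ v z) ((z - μ) * gaussianPDFReal μ v z) z := by
    intro z _
    refine ((hasDerivAt_gaussianPDFReal μ v z).const_mul (-(v : ℝ))).congr_deriv ?_
    field_simp [NNReal.coe_ne_zero.2 hv]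
  rw [integral_Ioi_of_hasDerivAt_of_tendsto' hderiv
    (integrable_sub_mul_gaussianPDFReal μ v).integrableOn
    (by simpa using (tendsto_gaussianPDFReal_atTop μ v).const_mul (-(v : ℝ)))]
  ring

end ProbabilityTheory

noncomputable def bachelierCall (x s : ℝ) : ℝ := ∫ z, max (s * z - x) 0 ∂gaussianReal 0 1

theorem integral_max_sub_gaussianReal_eq_bachelierCall (x t : ℝ) :
    ∫ y, max (y - x) 0 ∂gaussianReal 0 t.toNNReal = bachelierCall x √t := by
  have hmap : (gaussianReal 0 1).map (√t * ·) = gaussianReal 0 t.toNNReal := by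
    rw [gaussianReal_map_const_mul, mul_zero, mul_one]
    congr 1
    exact NNReal.eq (by simp [Real.sq_sqrt'])
  rw [← hmap, integral_map (by fun_prop) (by fun_prop)]
  rfl

theorem continuous_bachelierCall (x : ℝ) : Continuous (bachelierCall x) :=
  continuous_integral_max_mul_sub ((memLp_id_gaussianReal 1).integrable le_rfl) x

theorem bachelierCall_zero (x : ℝ) : bachelierCall x 0 = max (-x) 0 := by
  simp [bachelierCall]

theorem bachelierCall_of_pos (x : ℝ) {s : ℝ} (hs : 0 < s) :
    bachelierCall x s =
      s * gaussianPDFReal 0 1 (x / s) - x * ∫ z in Ioi (x / s), gaussianPDFReal 0 1 z := by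
  have hvanish : ∀ z ∉ Ioi (x / s), gaussianPDFReal 0 1 z • max (s * z - x) 0 = 0 := by
    intro z hz
    rw [mem_Ioi, not_lt, le_div_iff₀ hs] at hz
    rw [smul_eq_mul, max_eq_right (by linarith), mul_zero]
  rw [bachelierCall, integral_gaussianReal_eq_integral_smul one_ne_zero,
    ← setIntegral_eq_integral_of_forall_compl_eq_zero hvanish]
  calc ∫ z in Ioi (x / s), gaussianPDFReal 0 1 z • max (s * z - x) 0
      = ∫ z in Ioi (x / s),
          (s * ((z - 0) * gaussianPDFReal 0 1 z) - x * gaussianPDFReal 0 1 z) := by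
        refine setIntegral_congr_fun measurableSet_Ioi fun z hz => ?_
        rw [mem_Ioi, div_lt_iff₀ hs] at hz
        rw [smul_eq_mul, max_eq_left (by linarith)]
        ring
    _ = _ := by
      rw [integral_sub ((integrable_sub_mul_gaussianPDFReal 0 1).integrableOn.const_mul s)
        ((integrable_gaussianPDFReal 0 1).integrableOn.const_mul x), integral_const_mul,
        integral_const_mul, integral_Ioi_sub_mul_gaussianPDFReal, NNReal.coe_one, one_mul]

theorem hasDerivAt_bachelierCall (x : ℝ) {s : ℝ} (hs : 0 < s) :
    HasDerivAt (bachelierCall x) (gaussianPDFReal 0 1 (x / s)) s := by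
  have ha : HasDerivAt (fun s => x / s) (-x / s ^ 2) s := by
    simpa [div_eq_mul_inv] using (hasDerivAt_inv hs.ne').const_mul x
  have hφ := (hasDerivAt_gaussianPDFReal 0 1 (x / s)).comp s ha
  have hΨ := (hasDerivAt_integral_Ioi (integrable_gaussianPDFReal 0 1)
    (hasDerivAt_gaussianPDFReal 0 1 (x / s)).continuousAt).comp s ha
  have h := ((hasDerivAt_id s).mul hφ).sub (hΨ.const_mul x)
  refine (h.congr_deriv ?_).congr_of_eventuallyEq ?_
  · -- the two terms coming from `d(x/s)/ds` cancel because `s * (x / s) = x`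
    simp only [Function.comp_apply, id, NNReal.coe_one]
    field_simp
    ring
  · filter_upwards [Ioi_mem_nhds hs] with s hs using bachelierCall_of_pos x hs

theorem hasDerivAt_bachelierCall_sqrt (x : ℝ) {t : ℝ} (ht : 0 < t) :
    HasDerivAt (fun t => bachelierCall x √t) (gaussDensity t x / 2) t := by
  refine ((hasDerivAt_bachelierCall x (sqrt_pos.2 ht)).comp t
    (hasDerivAt_sqrt ht.ne')).congr_deriv ?_
  have hexp : -(x / √t - 0) ^ 2 / (2 * ((1 : ℝ≥0) : ℝ)) = -x ^ 2 / (2 * t) := by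
    rw [sub_zero, div_pow, sq_sqrt ht.le, NNReal.coe_one]
    ring
  have hs : 0 < √t := sqrt_pos.2 ht
  rw [gaussianPDFReal, hexp, gaussDensity, sqrt_mul (by positivity) t, NNReal.coe_one, mul_one]
  field_simp

/-- The Carr–Jarrow/Klebaner identity for Brownian motion: since `B_T ~ N(0, T)`,
`E[(B_T − x)⁺] = (−x)⁺ + (1/2) ∫₀^T f_t(x) dt`. -/
theorem carrJarrow_bm (x : ℝ) {T : ℝ} (hT : 0 < T) :
    (∫ y : ℝ, max (y - x) 0 ∂(gaussianReal 0 T.toNNReal)) =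
      max (-x) 0 + (1 / 2) * ∫ t in Set.Ioc (0 : ℝ) T, gaussDensity t x := by
  have hcont : ContinuousOn (fun t => bachelierCall x √t) (Icc 0 T) :=
    ((continuous_bachelierCall x).comp continuous_sqrt).continuousOn
  have hderiv : ∀ t ∈ Ioo 0 T,
      HasDerivAt (fun t => bachelierCall x √t) (gaussDensity t x / 2) t :=
    fun t ht => hasDerivAt_bachelierCall_sqrt x ht.1
  have hint := intervalIntegral.integrableOn_deriv_of_nonneg hcont hderiv fun t _ => by
    unfold gaussDensity; positivity
  have hFTC := intervalIntegral.integral_eq_sub_of_hasDerivAt_of_le hT.le hcont hderiv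
    ((intervalIntegrable_iff_integrableOn_Ioc_of_le hT.le).2 hint)
  rw [intervalIntegral.integral_of_le hT.le, integral_div, sqrt_zero, bachelierCall_zero] at hFTC
  rw [integral_max_sub_gaussianReal_eq_bachelierCall]
  linarith
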